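/- arXiv:0807.0956 — 5 statements merged into one kernel-verified Lean document; each statement's English description precedes it below -/
import Mathlib

section
/- For a nonsingular n×n real matrix A with inverse Γ, the componentwise condition number of the determinant satisfies c_det(A) = Σ_{i,j ∈ [n]} |a_{ij} γ_{ji}|, where c_det(A) = lim_{δ→0} sup_{A' ∈ B(A,δ), A' ≠ A} |det(A') − det(A)| / (δ |det(A)|) and B(A,δ) = {A' : |a'_{ij} − a_{ij}| ≤ δ|a_{ij}| for all i,j}. -/
open Matrix Filter Set
open scoped ENNReal Topology

/-- The componentwise ball of relative radius `δ` around a matrix `A`. -/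
def cball {m : ℕ} (A : Matrix (Fin m) (Fin m) ℝ) (δ : ℝ) :
    Set (Matrix (Fin m) (Fin m) ℝ) :=
  {A' | ∀ i j, |A' i j - A i j| ≤ δ * |A i j|}

/-- The componentwise condition number of the determinant at `A`:
`lim_{δ→0⁺} sup_{A' ∈ B(A,δ)} |det A' − det A| / (δ |det A|)` (with values in `ℝ≥0∞`). -/
noncomputable def cdet {m : ℕ} (A : Matrix (Fin m) (Fin m) ℝ) : ℝ≥0∞ :=
  limsup
    (fun δ : ℝ => ⨆ A' ∈ cball A δ,
      ENNReal.ofReal |A'.det - A.det| / ENNReal.ofReal (δ * |A.det|))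
    (𝓝[>] (0 : ℝ))

/-!
By Jacobi's formula, `det A' - det A = tr (adj A * (A' - A)) + o(‖A' - A‖)`, and on the
componentwise ball `B(A, δ)` the perturbation `A' - A` has norm `O(δ)`. So up to `o(δ)` the
supremum of `|det A' - det A|` over `B(A, δ)` is the maximum of `|det A · tr (Γ E)|` over the box
`|eᵢⱼ| ≤ δ |aᵢⱼ|`, which is `δ |det A| Σ |aᵢⱼ γⱼᵢ|`, attained at `eᵢⱼ = δ |aᵢⱼ| sign γⱼᵢ`.
-/

theorem ENNReal.tendsto_biSup_ofReal {α β : Type*} {l : Filter α} {s : α → Set β}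
    {g : α → β → ℝ} {T : ℝ}
    (h : ∀ ε > 0, ∀ᶠ x in l, (∀ b ∈ s x, g x b ≤ T + ε) ∧ ∃ b ∈ s x, T - ε ≤ g x b) :
    Tendsto (fun x => ⨆ b ∈ s x, ENNReal.ofReal (g x b)) l (𝓝 (ENNReal.ofReal T)) := by
  refine tendsto_order.2 ⟨fun a ha => ?_, fun a ha => ?_⟩
  · obtain ⟨r, -, har, hrT⟩ := ENNReal.lt_iff_exists_real_btwn.1 ha
    have hrT : r < T := (ENNReal.ofReal_lt_ofReal_iff'.1 hrT).1
    filter_upwards [h (T - r) (by linarith)] with x ⟨_, b, hb, hle⟩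
    exact har.trans_le (le_iSup₂_of_le b hb (ENNReal.ofReal_le_ofReal (by linarith)))
  · obtain ⟨r, -, hTr, hra⟩ := ENNReal.lt_iff_exists_real_btwn.1 ha
    have hTr : T < r := (ENNReal.ofReal_lt_ofReal_iff'.1 hTr).1
    filter_upwards [h (r - T) (by linarith)] with x ⟨hle, _⟩
    refine lt_of_le_of_lt (iSup₂_le fun b hb => ENNReal.ofReal_le_ofReal ?_) hra
    linarith [hle b hb]

theorem abs_sign_le_one {α : Type*} [Ring α] [LinearOrder α] [IsStrictOrderedRing α] (x : α) :
    |(SignType.sign x : α)| ≤ 1 := by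
  rcases lt_trichotomy x 0 with h | h | h <;> simp [h]

namespace Matrix

theorem det_updateRow_eq_vecMul_adjugate {n R : Type*} [Fintype n] [DecidableEq n] [CommRing R]
    (A : Matrix n n R) (i : n) (b : n → R) : (A.updateRow i b).det = (b ᵥ* A.adjugate) i := by
  rw [← cramer_transpose_apply, cramer_eq_adjugate_mulVec, ← adjugate_transpose, mulVec_transpose]

theorem trace_mul_eq_sum {n R : Type*} [Fintype n] [CommRing R] (Γ E : Matrix n n R) :
    trace (Γ * E) = ∑ i, ∑ j, E i j * Γ j i := by
  rw [trace_mul_comm]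
  rfl

theorem trace_adjugate_mul {K n : Type*} [Field K] [Fintype n] [DecidableEq n]
    {A : Matrix n n K} (hA : IsUnit A.det) (E : Matrix n n K) :
    trace (A.adjugate * E) = A.det * trace (A⁻¹ * E) := by
  rw [inv_def, Ring.inverse_eq_inv', smul_mul_assoc, trace_smul, smul_eq_mul, ← mul_assoc,
    mul_inv_cancel₀ hA.ne_zero, one_mul]

-- Any norm would do; with the entrywise sup norm, `B(A, δ)` lies in the ball of radius `δ ‖A‖`.
attribute [local instance] Matrix.normedAddCommGroup Matrix.normedSpace

section Jacobi

variable {𝕜 n : Type*} [NontriviallyNormedField 𝕜] [Fintype n] [DecidableEq n]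

def detContinuousMultilinearMap : ContinuousMultilinearMap 𝕜 (fun _ : n => n → 𝕜) 𝕜 where
  toMultilinearMap := (detRowAlternating : (n → 𝕜) [⋀^n]→ₗ[𝕜] 𝕜).toMultilinearMap
  cont := continuous_id.matrix_det

theorem detContinuousMultilinearMap_linearDeriv (A E : Matrix n n 𝕜) :
    (detContinuousMultilinearMap (𝕜 := 𝕜)).linearDeriv A E = trace (A.adjugate * E) := by
  rw [trace_mul_comm]
  exact (ContinuousMultilinearMap.linearDeriv_apply _ _ _).trans
    (Finset.sum_congr rfl fun i _ => det_updateRow_eq_vecMul_adjugate A i (E i))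

theorem isLittleO_det_sub_det_sub_trace_adjugate_mul (A : Matrix n n 𝕜) :
    (fun M => M.det - A.det - trace (A.adjugate * (M - A))) =o[𝓝 A] (fun M => M - A) :=
  ((detContinuousMultilinearMap (𝕜 := 𝕜) (n := n)).hasFDerivAt A).isLittleO.congr_left
    fun M => congrArg (det M - A.det - ·) (detContinuousMultilinearMap_linearDeriv A (of M - A))

end Jacobi

section ComponentwiseBall

variable {m : ℕ} {A A' : Matrix (Fin m) (Fin m) ℝ} {δ : ℝ}

theorem norm_sub_le_of_mem_cball (hA' : A' ∈ cball A δ) (hδ : 0 ≤ δ) : ‖A' - A‖ ≤ δ * ‖A‖ :=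
  (norm_le_iff (by positivity)).2 fun i j =>
    (hA' i j).trans (mul_le_mul_of_nonneg_left (norm_entry_le_entrywise_sup_norm A) hδ)

theorem eventually_cball_subset {U : Set (Matrix (Fin m) (Fin m) ℝ)} (hU : U ∈ 𝓝 A) :
    ∀ᶠ δ in 𝓝[>] 0, cball A δ ⊆ U := by
  obtain ⟨r, hr, hball⟩ := Metric.mem_nhds_iff.1 hU
  have hlim : Tendsto (fun δ : ℝ => δ * ‖A‖) (𝓝[>] 0) (𝓝 0) :=
    ((continuous_mul_const ‖A‖).tendsto' 0 0 (zero_mul _)).mono_left nhdsWithin_le_nhds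
  filter_upwards [hlim.eventually (gt_mem_nhds hr), self_mem_nhdsWithin] with δ hδr hδ A' hA'
  exact hball (mem_ball_iff_norm.2 ((norm_sub_le_of_mem_cball hA' hδ.le).trans_lt hδr))

theorem eventually_abs_det_sub_det_sub_trace_le (A : Matrix (Fin m) (Fin m) ℝ) {c : ℝ}
    (hc : 0 < c) : ∀ᶠ δ in 𝓝[>] 0, ∀ A' ∈ cball A δ,
      |A'.det - A.det - trace (A.adjugate * (A' - A))| ≤ c * δ := by
  have hA : 0 < ‖A‖ + 1 := by positivity
  filter_upwards [eventually_cball_subset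
      ((isLittleO_det_sub_det_sub_trace_adjugate_mul A).def (div_pos hc hA)),
    self_mem_nhdsWithin] with δ hsub (hδ : 0 < δ) A' hA'
  calc |A'.det - A.det - trace (A.adjugate * (A' - A))|
      ≤ c / (‖A‖ + 1) * ‖A' - A‖ := hsub hA'
    _ ≤ c / (‖A‖ + 1) * (δ * ‖A‖) := by gcongr; exact norm_sub_le_of_mem_cball hA' hδ.le
    _ ≤ c * δ := by
      rw [div_mul_eq_mul_div, div_le_iff₀ hA]
      nlinarith [mul_pos hc hδ]

theorem abs_trace_mul_sub_le (Γ : Matrix (Fin m) (Fin m) ℝ) (hA' : A' ∈ cball A δ) :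
    |trace (Γ * (A' - A))| ≤ δ * ∑ i, ∑ j, |A i j * Γ j i| := by
  rw [trace_mul_eq_sum, Finset.mul_sum]
  refine (Finset.abs_sum_le_sum_abs _ _).trans (Finset.sum_le_sum fun i _ => ?_)
  rw [Finset.mul_sum]
  refine (Finset.abs_sum_le_sum_abs _ _).trans (Finset.sum_le_sum fun j _ => ?_)
  rw [abs_mul, abs_mul, ← mul_assoc]
  exact mul_le_mul_of_nonneg_right (hA' i j) (abs_nonneg _)

theorem exists_mem_cball_trace_mul_sub_eq (Γ : Matrix (Fin m) (Fin m) ℝ) (hδ : 0 ≤ δ) :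
    ∃ A' ∈ cball A δ, trace (Γ * (A' - A)) = δ * ∑ i, ∑ j, |A i j * Γ j i| := by
  refine ⟨A + of fun i j => δ * |A i j| * SignType.sign (Γ j i), fun i j => ?_, ?_⟩
  · rw [add_apply, add_sub_cancel_left, of_apply, abs_mul, abs_mul, abs_of_nonneg hδ, abs_abs]
    exact mul_le_of_le_one_right (by positivity) (abs_sign_le_one _)
  · rw [add_sub_cancel_left, trace_mul_eq_sum, Finset.mul_sum]
    refine Finset.sum_congr rfl fun i _ => ?_
    rw [Finset.mul_sum]
    refine Finset.sum_congr rfl fun j _ => ?_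
    rw [of_apply, mul_assoc, sign_mul_self, abs_mul, mul_assoc]

end ComponentwiseBall

end Matrix

theorem eventually_abs_det_sub_div_bounds {m : ℕ} {A : Matrix (Fin m) (Fin m) ℝ}
    (hA : IsUnit A.det) {ε : ℝ} (hε : 0 < ε) :
    ∀ᶠ δ in 𝓝[>] 0,
      (∀ A' ∈ cball A δ, |A'.det - A.det| / (δ * |A.det|) ≤ ∑ i, ∑ j, |A i j * A⁻¹ j i| + ε) ∧
      ∃ A' ∈ cball A δ, ∑ i, ∑ j, |A i j * A⁻¹ j i| - ε ≤ |A'.det - A.det| / (δ * |A.det|) := by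
  have hdet : 0 < |A.det| := abs_pos.2 hA.ne_zero
  filter_upwards [eventually_abs_det_sub_det_sub_trace_le A (mul_pos hε hdet),
    self_mem_nhdsWithin] with δ hrem (hδ : 0 < δ)
  simp only [trace_adjugate_mul hA] at hrem
  refine ⟨fun A' hA' => ?_, ?_⟩
  · rw [div_le_iff₀ (mul_pos hδ hdet)]
    have htr := mul_le_mul_of_nonneg_left (abs_trace_mul_sub_le A⁻¹ hA') hdet.le
    have hsub := abs_sub_abs_le_abs_sub (A'.det - A.det) (A.det * trace (A⁻¹ * (A' - A)))
    rw [abs_mul] at hsub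
    linarith [hrem A' hA']
  · obtain ⟨A', hA', htr⟩ := exists_mem_cball_trace_mul_sub_eq (A := A) A⁻¹ hδ.le
    refine ⟨A', hA', ?_⟩
    rw [le_div_iff₀ (mul_pos hδ hdet)]
    have hsub := abs_sub_abs_le_abs_sub (A.det * trace (A⁻¹ * (A' - A))) (A'.det - A.det)
    rw [abs_sub_comm _ (A'.det - A.det), abs_mul, htr,
      abs_of_nonneg (a := δ * _) (by positivity)] at hsub
    linarith [htr ▸ hrem A' hA']

/-- For a nonsingular matrix `A` with inverse `Γ = A⁻¹`,
`c_det(A) = Σ_{i,j} |a_{ij} γ_{ji}|`. -/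
theorem cdet_eq_sum_abs_entries_inv
    (m : ℕ) (A : Matrix (Fin m) (Fin m) ℝ) (hA : IsUnit A.det) :
    cdet A = ENNReal.ofReal (∑ i, ∑ j, |A i j * A⁻¹ j i|) := by
  have hdet : 0 < |A.det| := abs_pos.2 hA.ne_zero
  refine Tendsto.limsup_eq ((ENNReal.tendsto_biSup_ofReal fun ε hε =>
    eventually_abs_det_sub_div_bounds hA hε).congr' ?_)
  filter_upwards [self_mem_nhdsWithin] with δ (hδ : 0 < δ)
  simp only [ENNReal.ofReal_div_of_pos (mul_pos hδ hdet)]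
end

section
/- Let S ⊆ [n]² and let A be a random matrix with independent standard Gaussian entries at positions in S and zeros elsewhere. Then for all t ≥ 2|S|, Prob{ Σ_{(i,j)∈S} |a_{ij} det(A_{(ij)}) / det(A)| ≥ t } ≤ |S|²/t, provided det is not identically zero on M_S; if det vanishes identically on M_S the componentwise condition number of the determinant is 0 everywhere on M_S. -/
open MeasureTheory ProbabilityTheory Matrix Filter Set
open scoped ENNReal Topology

/-- The sparse matrix with support `S` built from the coordinates `g`. -/
noncomputable def matOf {n : ℕ} (S : Finset (Fin n × Fin n)) (g : S → ℝ) :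
    Matrix (Fin n) (Fin n) ℝ :=
  Matrix.of fun i j => if h : (i, j) ∈ S then g ⟨(i, j), h⟩ else 0

/-- The product standard Gaussian measure on the coordinates indexed by `S`. -/
noncomputable def gaussS {n : ℕ} (S : Finset (Fin n × Fin n)) : Measure (S → ℝ) :=
  Measure.pi fun _ => gaussianReal 0 1

/-!
Fix `(i, j) ∈ S` and condition on the other entries. Expanding along row `i`, `det A` is affine
in `x = a_ij` with slope `± det A_(ij)`, so the `(i, j)` summand is `|x / (x + r)|` for a
standard Gaussian `x` and a constant `r`. The event `|x / (x + r)| ≥ s` (with `s ≥ 2`) puts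
`x = -λ r` with `λ ∈ [s/(s+1), s/(s-1)]`, an interval of length `2s|r|/(s²-1)` on which
`|x| ≥ s|r|/(s+1)`; since `u φ(u) ≤ 1/4` for the standard normal density `φ`, its probability
is at most `1/s`. A union bound over the `|S|` summands at level `t/|S|` gives `|S|²/t`.

If `det` vanishes on `M_S`, then so does every componentwise perturbation of a matrix in
`M_S`, since it keeps the zero pattern, and the quotient defining `c_det` is identically `0`.
-/

theorem mul_exp_neg_sq_div_two_le (u : ℝ) : u * Real.exp (-u ^ 2 / 2) ≤ Real.exp (-1 / 2) := by
  have hu : u ≤ Real.exp ((u ^ 2 - 1) / 2) := by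
    nlinarith [Real.add_one_le_exp ((u ^ 2 - 1) / 2), sq_nonneg (u - 1)]
  calc u * Real.exp (-u ^ 2 / 2) ≤ Real.exp ((u ^ 2 - 1) / 2) * Real.exp (-u ^ 2 / 2) := by
        gcongr
    _ = Real.exp (-1 / 2) := by rw [← Real.exp_add]; ring_nf

theorem mul_gaussianPDFReal_le (u : ℝ) : u * gaussianPDFReal 0 1 u ≤ 1 / 4 := by
  -- the maximum, at `u = 1`, is `1 / √(2πe) ≈ 0.242`
  have hexp : 4 * Real.exp (-1 / 2) ≤ √(2 * Real.pi) := by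
    refine Real.le_sqrt_of_sq_le ?_
    have hsq : Real.exp (-1 / 2) ^ 2 * Real.exp 1 = 1 := by
      rw [← Real.exp_nat_mul, ← Real.exp_add]; norm_num
    nlinarith [Real.exp_one_gt_d9, Real.pi_gt_three, sq_nonneg (Real.exp (-1 / 2))]
  have hpos : 0 < √(2 * Real.pi) := by positivity
  rw [gaussianPDFReal, NNReal.coe_one, sub_zero, mul_one, mul_left_comm, inv_mul_eq_div,
    div_le_iff₀ hpos]
  linarith [mul_exp_neg_sq_div_two_le u]

theorem gaussianPDFReal_le_of_le_abs {m x : ℝ} (hm : 0 ≤ m) (hx : m ≤ |x|) :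
    gaussianPDFReal 0 1 x ≤ gaussianPDFReal 0 1 m := by
  simp only [gaussianPDFReal, NNReal.coe_one, sub_zero, mul_one]
  gcongr _ * Real.exp ?_
  nlinarith [sq_abs x]

theorem gaussianReal_le_volume_mul_gaussianPDFReal {T : Set ℝ} {m : ℝ} (hm : 0 ≤ m)
    (hT : ∀ x ∈ T, m ≤ |x|) :
    gaussianReal 0 1 T ≤ volume T * ENNReal.ofReal (gaussianPDFReal 0 1 m) := by
  rw [gaussianReal_apply 0 one_ne_zero, mul_comm, ← setLIntegral_const]
  exact setLIntegral_mono measurable_const fun x hx =>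
    ENNReal.ofReal_le_ofReal (gaussianPDFReal_le_of_le_abs hm (hT x hx))

theorem mem_Icc_of_mul_abs_one_sub_le {s l : ℝ} (hs : 1 < s) (h : s * |1 - l| ≤ |l|) :
    l ∈ Icc (s / (s + 1)) (s / (s - 1)) := by
  have hl : 0 < l := by
    by_contra! hl
    rw [abs_of_nonpos hl, abs_of_pos (by linarith)] at h
    nlinarith
  rw [abs_of_pos hl] at h
  constructor
  · rw [div_le_iff₀ (by linarith)]
    nlinarith [le_abs_self (1 - l)]
  · rw [le_div_iff₀ (by linarith)]
    nlinarith [neg_abs_le (1 - l)]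

theorem setOf_le_abs_div_add_subset {s r : ℝ} (hs : 1 < s) (hr : r ≠ 0) :
    {x | s ≤ |x / (x + r)|} ⊆ (· * -r) '' Icc (s / (s + 1)) (s / (s - 1)) := by
  intro x hx
  have hxr : x + r ≠ 0 := fun h0 => by
    have := hx.out
    rw [h0, div_zero, abs_zero] at this
    linarith
  have hx' : s * |x + r| ≤ |x| := by
    simpa only [abs_div, le_div_iff₀ (abs_pos.2 hxr)] using hx.out
  refine ⟨-x / r, mem_Icc_of_mul_abs_one_sub_le hs ?_, by field_simp⟩
  have h1 : |x + r| = |r| * |1 - -x / r| := by rw [← abs_mul]; congr 1; field_simp; ring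
  have h2 : |x| = |r| * |-x / r| := by rw [← abs_mul, mul_div_cancel₀ _ hr, abs_neg]
  rw [h1, h2, mul_left_comm] at hx'
  exact le_of_mul_le_mul_left hx' (abs_pos.2 hr)

theorem Real.volume_image_mul_const_Icc {a b : ℝ} (hab : a ≤ b) (c : ℝ) :
    volume ((· * c) '' Icc a b) = ENNReal.ofReal ((b - a) * |c|) := by
  rw [← uIcc_of_le hab, image_mul_const_uIcc, Real.volume_interval, ← sub_mul, abs_mul,
    abs_of_nonneg (sub_nonneg.2 hab)]

theorem gaussianReal_abs_div_add_ge_le {s : ℝ} (hs : 2 ≤ s) (r : ℝ) :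
    gaussianReal 0 1 {x | s ≤ |x / (x + r)|} ≤ ENNReal.ofReal (1 / s) := by
  rcases eq_or_ne r 0 with rfl | hr
  · have hempty : ∀ x : ℝ, ¬ s ≤ |x / x| := fun x => by
      rw [abs_div]; linarith [div_self_le_one |x|]
    simp [hempty]
  set a := s / (s + 1)
  have ha : 0 < a := div_pos (by linarith) (by linarith)
  have hc : 0 ≤ 2 / (s - 1) := div_nonneg zero_le_two (by linarith)
  have hmin : ∀ x ∈ (· * -r) '' Icc a (s / (s - 1)), a * |r| ≤ |x| := by
    rintro _ ⟨l, hl, rfl⟩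
    rw [abs_mul, abs_neg, abs_of_pos (ha.trans_le hl.1)]
    gcongr
    exact hl.1
  have hvol : volume ((· * -r) '' Icc a (s / (s - 1))) =
      ENNReal.ofReal (2 / (s - 1) * (a * |r|)) := by
    rw [Real.volume_image_mul_const_Icc
      (div_le_div_of_nonneg_left (by linarith) (by linarith) (by linarith)), abs_neg]
    congr 1
    have : s - 1 ≠ 0 := by linarith
    have : s + 1 ≠ 0 := by linarith
    simp only [a]
    field_simp
    ring
  calc gaussianReal 0 1 {x | s ≤ |x / (x + r)|}
      ≤ volume ((· * -r) '' Icc a (s / (s - 1))) *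
          ENNReal.ofReal (gaussianPDFReal 0 1 (a * |r|)) :=
        (measure_mono (setOf_le_abs_div_add_subset (by linarith) hr)).trans
          (gaussianReal_le_volume_mul_gaussianPDFReal (by positivity) hmin)
    _ = ENNReal.ofReal (2 / (s - 1) * (a * |r| * gaussianPDFReal 0 1 (a * |r|))) := by
        rw [hvol, ← ENNReal.ofReal_mul (mul_nonneg hc (by positivity)), mul_assoc]
    _ ≤ ENNReal.ofReal (2 / (s - 1) * (1 / 4)) := by
        gcongr
        exact mul_gaussianPDFReal_le _
    _ ≤ ENNReal.ofReal (1 / s) := by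
        refine ENNReal.ofReal_le_ofReal ?_
        rw [div_mul_div_comm, div_le_div_iff₀ (by nlinarith) (by linarith)]
        linarith

theorem gaussianReal_abs_mul_div_mul_add_ge_le {s c d M : ℝ} (hs : 2 ≤ s) (hcM : |c| = |M|) :
    gaussianReal 0 1 {x | s ≤ |x * M / (x * c + d)|} ≤ ENNReal.ofReal (1 / s) := by
  rcases eq_or_ne c 0 with rfl | hc
  · have hM : M = 0 := by simpa [eq_comm] using hcM
    have hs0 : ¬ s ≤ 0 := by linarith
    simp [hM, hs0]
  · have hfrac : ∀ x, |x * M / (x * c + d)| = |x / (x + d / c)| := by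
      intro x
      rw [show x * c + d = (x + d / c) * c by field_simp, abs_div, abs_div, abs_mul, abs_mul,
        hcM, mul_div_mul_right _ _ (abs_pos.2 fun h => hc (by simpa [h] using hcM)).ne']
    simpa only [hfrac] using gaussianReal_abs_div_add_ge_le hs (d / c)

theorem MeasureTheory.Measure.pi_le_of_forall_update_le {ι : Type*} [Fintype ι] [DecidableEq ι]
    {X : ι → Type*} [∀ i, MeasurableSpace (X i)] (μ : ∀ i, Measure (X i))
    [∀ i, IsProbabilityMeasure (μ i)] (i : ι) {E : Set (∀ i, X i)} (hE : MeasurableSet E)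
    {c : ℝ≥0∞} (h : ∀ x, μ i {y | Function.update x i y ∈ E} ≤ c) :
    Measure.pi μ E ≤ c := by
  have hmarg : ∫⋯∫⁻_{i}, E.indicator 1 ∂μ ≤ ∫⋯∫⁻_{i}, (fun _ => c) ∂μ := by
    intro x
    simp only [lmarginal_singleton, lintegral_const, measure_univ, mul_one]
    have hslice := lintegral_indicator_one (μ := μ i) (measurable_update x hE)
    simp only [indicator, mem_preimage, Pi.one_apply] at hslice ⊢
    exact hslice.trans_le (h x)
  simpa [lintegral_indicator_one hE] using
    lintegral_le_of_lmarginal_le {i} (measurable_one.indicator hE) measurable_const hmarg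

theorem Matrix.det_updateRow_update {ι R : Type*} [Fintype ι] [DecidableEq ι] [CommRing R]
    (B : Matrix ι ι R) (i j : ι) (x : R) :
    (B.updateRow i (Function.update (B i) j x)).det =
      x * B.adjugate j i + (B.updateRow i (Function.update (B i) j 0)).det := by
  have hrow : Function.update (B i) j x = x • Pi.single j 1 + Function.update (B i) j 0 := by
    ext k
    rcases eq_or_ne k j with rfl | hk <;> simp [*]
  rw [hrow, det_updateRow_add, det_updateRow_smul, adjugate_apply]

theorem matOf_update {n : ℕ} (S : Finset (Fin n × Fin n)) (f : S → ℝ) {i j : Fin n}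
    (hij : (i, j) ∈ S) (x : ℝ) :
    matOf S (Function.update f ⟨(i, j), hij⟩ x) =
      (matOf S f).updateRow i (Function.update (matOf S f i) j x) := by
  ext k l
  rcases eq_or_ne k i with rfl | hk
  · rcases eq_or_ne l j with rfl | hl
    · simp [matOf, hij]
    · simp [matOf, hl]
  · simp [matOf, hk]

theorem continuous_matOf {n : ℕ} (S : Finset (Fin n × Fin n)) : Continuous (matOf S) := by
  refine continuous_pi fun i => continuous_pi fun j => ?_
  by_cases h : (i, j) ∈ S
  · simpa [matOf, h] using continuous_apply _
  · simpa [matOf, h] using continuous_const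

theorem gaussS_abs_entry_mul_minor_div_det_ge_le {n : ℕ}
    (S : Finset (Fin (n + 1) × Fin (n + 1))) {p : Fin (n + 1) × Fin (n + 1)} (hp : p ∈ S)
    {s : ℝ} (hs : 2 ≤ s) :
    gaussS S {g | s ≤ |matOf S g p.1 p.2 *
        ((matOf S g).submatrix p.1.succAbove p.2.succAbove).det / (matOf S g).det|} ≤
      ENNReal.ofReal (1 / s) := by
  obtain ⟨i, j⟩ := p
  have hcont := continuous_matOf S
  have hmeas : Measurable fun g => |matOf S g i j *
      ((matOf S g).submatrix i.succAbove j.succAbove).det / (matOf S g).det| := by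
    fun_prop
  refine Measure.pi_le_of_forall_update_le _ ⟨(i, j), hp⟩
    (measurableSet_le measurable_const hmeas) fun f => ?_
  set B := matOf S f
  have hslice : ∀ x, matOf S (Function.update f ⟨(i, j), hp⟩ x) i j *
      ((matOf S (Function.update f ⟨(i, j), hp⟩ x)).submatrix i.succAbove j.succAbove).det /
        (matOf S (Function.update f ⟨(i, j), hp⟩ x)).det =
      x * (B.submatrix i.succAbove j.succAbove).det /
        (x * B.adjugate j i + (B.updateRow i (Function.update (B i) j 0)).det) := by
    intro x
    rw [matOf_update, updateRow_self, Function.update_self, submatrix_updateRow_succAbove,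
      det_updateRow_update]
  simp only [mem_ofPred_eq, hslice]
  refine gaussianReal_abs_mul_div_mul_add_ge_le hs ?_
  rw [adjugate_fin_succ_eq_det_submatrix, abs_mul, abs_pow, abs_neg, abs_one, one_pow, one_mul]

theorem measure_sum_ge_le_sum_measure_ge {α ι : Type*} [MeasurableSpace α] (μ : Measure α)
    {S : Finset ι} (hS : S.Nonempty) (F : ι → α → ℝ) (t : ℝ) :
    μ {x | t ≤ ∑ p ∈ S, F p x} ≤ ∑ p ∈ S, μ {x | t / S.card ≤ F p x} := by
  refine (measure_mono fun x hx => ?_).trans (measure_biUnion_finset_le S _)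
  have hsum : ∑ _p ∈ S, t / S.card = t := by
    rw [Finset.sum_const, nsmul_eq_mul, mul_div_cancel₀ _ (by simpa using hS.ne_empty)]
  obtain ⟨p, hp, hle⟩ := Finset.exists_le_of_sum_le hS (hsum.trans_le hx.out)
  exact mem_biUnion hp hle

theorem cdet_eq_zero_of_forall_mem_cball_det_eq_zero {m : ℕ} {A : Matrix (Fin m) (Fin m) ℝ}
    (h : ∀ δ, ∀ A' ∈ cball A δ, A'.det = 0) : cdet A = 0 := by
  have hA : A.det = 0 := h 0 A fun i j => by simp
  have hzero : ∀ δ : ℝ, ⨆ A' ∈ cball A δ,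
      ENNReal.ofReal |A'.det - A.det| / ENNReal.ofReal (δ * |A.det|) = 0 := fun δ =>
    le_antisymm (iSup₂_le fun A' hA' => by simp [h δ A' hA', hA]) zero_le
  simp only [cdet, hzero, limsup_const]

theorem exists_matOf_eq_of_mem_cball {n : ℕ} {S : Finset (Fin n × Fin n)} {g : S → ℝ} {δ : ℝ}
    {A' : Matrix (Fin n) (Fin n) ℝ} (hA' : A' ∈ cball (matOf S g) δ) :
    ∃ g' : S → ℝ, A' = matOf S g' := by
  refine ⟨fun q => A' q.1.1 q.1.2, ?_⟩
  ext i j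
  by_cases h : (i, j) ∈ S
  · simp [matOf, h]
  · simpa [matOf, h] using hA' i j

theorem matOf_empty {n : ℕ} (g : (∅ : Finset (Fin n × Fin n)) → ℝ) : matOf ∅ g = 0 := by
  ext i j
  simp [matOf]

/-- Tail bound for the componentwise condition number of the determinant of a random sparse
matrix: if `det` is not identically zero on `M_S` then for `t ≥ 2|S|`,
`Prob{Σ_{(i,j)∈S} |a_{ij} det A_{(ij)} / det A| ≥ t} ≤ |S|²/t`; if `det` vanishes identically
on `M_S`, then `c_det = 0` everywhere on `M_S`. -/
theorem cdet_tail_bound_sparse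
    (n : ℕ) (S : Finset (Fin (n + 1) × Fin (n + 1))) (t : ℝ)
    (ht : 2 * (S.card : ℝ) ≤ t) :
    ((∃ g : S → ℝ, (matOf S g).det ≠ 0) →
      gaussS S {g | t ≤ ∑ p ∈ S,
          |matOf S g p.1 p.2 *
            ((matOf S g).submatrix p.1.succAbove p.2.succAbove).det / (matOf S g).det|} ≤
        ENNReal.ofReal ((S.card : ℝ) ^ 2 / t)) ∧
    ((∀ g : S → ℝ, (matOf S g).det = 0) → ∀ g : S → ℝ, cdet (matOf S g) = 0) := by
  refine ⟨fun ⟨g₀, hg₀⟩ => ?_, fun hdet _ => ?_⟩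
  · have hS : S.Nonempty := by
      rw [Finset.nonempty_iff_ne_empty]
      rintro rfl
      exact hg₀ (by rw [matOf_empty, det_zero])
    have hcard : (0 : ℝ) < S.card := by exact_mod_cast hS.card_pos
    have hs : 2 ≤ t / S.card := by rw [le_div_iff₀ hcard]; linarith
    calc _ ≤ ∑ p ∈ S, gaussS S {g | t / S.card ≤ |matOf S g p.1 p.2 *
            ((matOf S g).submatrix p.1.succAbove p.2.succAbove).det / (matOf S g).det|} :=
          measure_sum_ge_le_sum_measure_ge _ hS _ t
      _ ≤ ∑ _p ∈ S, ENNReal.ofReal (1 / (t / S.card)) :=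
          Finset.sum_le_sum fun p hp => gaussS_abs_entry_mul_minor_div_det_ge_le S hp hs
      _ = ENNReal.ofReal ((S.card : ℝ) ^ 2 / t) := by
          rw [Finset.sum_const, nsmul_eq_mul, ← ENNReal.ofReal_natCast,
            ← ENNReal.ofReal_mul (Nat.cast_nonneg _)]
          congr 1
          field_simp
  · exact cdet_eq_zero_of_forall_mem_cball_det_eq_zero fun δ A' hA' => by
      obtain ⟨g', rfl⟩ := exists_matOf_eq_of_mem_cball hA'
      exact hdet g'
end

section
/- Let F : D → ℝ^q be continuous, a ∈ D with all components of F(a) nonzero, and let ‖·‖ be a monotonic norm on ℝ^q (i.e., |u_i| ≤ |v_i| for all i implies ‖u‖ ≤ ‖v‖). Then the mixed condition number m(F,a) is at most the componentwise condition number c(F,a): m(F,a) = lim_{δ→0} sup_{x∈B(a,δ), x≠a} (‖F(x)−F(a)‖/‖F(a)‖)/d(x,a) ≤ lim_{δ→0} sup_{x∈B(a,δ), x≠a} d(F(x),F(a))/d(x,a) = c(F,a). -/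
open Filter Set
open scoped ENNReal Topology

/-- The componentwise relative "distance" `d(u,v) = max_i |u_i − v_i|/|v_i|`, interpreted as
`0` when `u_i = v_i` and as `∞` when `v_i = 0 ≠ u_i`. -/
noncomputable def dRel {p : ℕ} (u v : Fin p → ℝ) : ℝ≥0∞ :=
  ⨆ i, if u i = v i then 0
    else if v i = 0 then ⊤ else ENNReal.ofReal (|u i - v i| / |v i|)

/-! Componentwise `|F x j - F a j| ≤ d(F x, F a) * |F a j|`, and monotonicity plus homogeneity
of `N` lift this to `N (F x - F a) ≤ d(F x, F a) * N (F a)`. So the quantity inside the mixed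
condition number is pointwise below the one inside the componentwise condition number, and
suprema and limsups are monotone. -/

theorem abs_sub_le_toReal_dRel_mul_abs {p : ℕ} {u v : Fin p → ℝ} (h : dRel u v ≠ ⊤)
    (j : Fin p) : |u j - v j| ≤ (dRel u v).toReal * |v j| := by
  have hj : (if u j = v j then 0
      else if v j = 0 then ⊤ else ENNReal.ofReal (|u j - v j| / |v j|)) ≤ dRel u v :=
    le_iSup (fun i ↦ if u i = v i then (0 : ℝ≥0∞)
      else if v i = 0 then ⊤ else ENNReal.ofReal (|u i - v i| / |v i|)) j
  by_cases huv : u j = v j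
  · simp only [huv, sub_self, abs_zero]
    positivity
  have hv : v j ≠ 0 := fun hv ↦ by
    rw [if_neg huv, if_pos hv, top_le_iff] at hj
    exact h hj
  rw [if_neg huv, if_neg hv, ENNReal.ofReal_le_iff_le_toReal h,
    div_le_iff₀ (abs_pos.mpr hv)] at hj
  exact hj

section MonotonicNorm

variable {q : ℕ} {N : (Fin q → ℝ) → ℝ}

theorem nonneg_of_monotonic_of_homogeneous
    (hmono : ∀ u v : Fin q → ℝ, (∀ j, |u j| ≤ |v j|) → N u ≤ N v)
    (hhomog : ∀ (r : ℝ) (u : Fin q → ℝ), N (r • u) = |r| * N u) (v : Fin q → ℝ) :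
    0 ≤ N v := by
  have hN0 : N 0 = 0 := by simpa using hhomog 0 0
  simpa [hN0] using hmono 0 v (by simp)

theorem le_mul_of_abs_le_mul_abs
    (hmono : ∀ u v : Fin q → ℝ, (∀ j, |u j| ≤ |v j|) → N u ≤ N v)
    (hhomog : ∀ (r : ℝ) (u : Fin q → ℝ), N (r • u) = |r| * N u)
    {u v : Fin q → ℝ} {c : ℝ} (hc : 0 ≤ c) (h : ∀ j, |u j| ≤ c * |v j|) :
    N u ≤ c * N v := by
  have := hmono u (c • v) fun j ↦ by
    simpa only [Pi.smul_apply, smul_eq_mul, abs_mul, abs_of_nonneg hc] using h j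
  rwa [hhomog, abs_of_nonneg hc] at this

theorem ofReal_div_le_dRel
    (hmono : ∀ u v : Fin q → ℝ, (∀ j, |u j| ≤ |v j|) → N u ≤ N v)
    (hhomog : ∀ (r : ℝ) (u : Fin q → ℝ), N (r • u) = |r| * N u) (u v : Fin q → ℝ) :
    ENNReal.ofReal (N (u - v) / N v) ≤ dRel u v := by
  by_cases htop : dRel u v = ⊤
  · simp [htop]
  set c := (dRel u v).toReal
  have hc : 0 ≤ c := ENNReal.toReal_nonneg
  have hle : N (u - v) ≤ c * N v :=
    le_mul_of_abs_le_mul_abs hmono hhomog hc (abs_sub_le_toReal_dRel_mul_abs htop)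
  -- `N v = 0` is harmless: the quotient is then the junk value `0`.
  have hdiv : N (u - v) / N v ≤ c := by
    rcases (nonneg_of_monotonic_of_homogeneous hmono hhomog v).eq_or_lt with h0 | hpos
    · simp [← h0, hc]
    · rwa [div_le_iff₀ hpos]
  rw [← ENNReal.ofReal_toReal htop]
  exact ENNReal.ofReal_le_ofReal hdiv

end MonotonicNorm

theorem mixed_le_componentwise_condition_number_general
    (p q : ℕ) (D : Set (Fin p → ℝ)) (F : (Fin p → ℝ) → (Fin q → ℝ))
    (a : Fin p → ℝ)
    (N : (Fin q → ℝ) → ℝ)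
    (hmono : ∀ u v : Fin q → ℝ, (∀ j, |u j| ≤ |v j|) → N u ≤ N v)
    (hhomog : ∀ (r : ℝ) (u : Fin q → ℝ), N (r • u) = |r| * N u) :
    limsup
        (fun δ : ℝ => ⨆ x ∈ {x ∈ D | dRel x a ≤ ENNReal.ofReal δ ∧ x ≠ a},
          ENNReal.ofReal (N (F x - F a) / N (F a)) / dRel x a)
        (𝓝[>] (0 : ℝ)) ≤
      limsup
        (fun δ : ℝ => ⨆ x ∈ {x ∈ D | dRel x a ≤ ENNReal.ofReal δ ∧ x ≠ a},
          dRel (F x) (F a) / dRel x a)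
        (𝓝[>] (0 : ℝ)) :=
  limsup_le_limsup <| Eventually.of_forall fun _ ↦ iSup₂_mono fun x _ ↦
    ENNReal.div_le_div_right (ofReal_div_le_dRel hmono hhomog (F x) (F a)) _

/-- For a continuous map `F : D → ℝ^q`, a point `a` with all components of `F a` nonzero,
and a monotonic norm `N` on `ℝ^q`, the mixed condition number `m(F,a)` is bounded by the
componentwise condition number `c(F,a)`. -/
theorem mixed_le_componentwise_condition_number
    (p q : ℕ) (D : Set (Fin p → ℝ)) (F : (Fin p → ℝ) → (Fin q → ℝ))
    (hF : ContinuousOn F D) (a : Fin p → ℝ) (ha : a ∈ D) (haF : ∀ j, F a j ≠ 0)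
    (N : (Fin q → ℝ) → ℝ)
    (hmono : ∀ u v : Fin q → ℝ, (∀ j, |u j| ≤ |v j|) → N u ≤ N v)
    (hhomog : ∀ (r : ℝ) (u : Fin q → ℝ), N (r • u) = |r| * N u) :
    limsup
        (fun δ : ℝ => ⨆ x ∈ {x ∈ D | dRel x a ≤ ENNReal.ofReal δ ∧ x ≠ a},
          ENNReal.ofReal (N (F x - F a) / N (F a)) / dRel x a)
        (𝓝[>] (0 : ℝ)) ≤
      limsup
        (fun δ : ℝ => ⨆ x ∈ {x ∈ D | dRel x a ≤ ENNReal.ofReal δ ∧ x ≠ a},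
          dRel (F x) (F a) / dRel x a)
        (𝓝[>] (0 : ℝ)) :=
  mixed_le_componentwise_condition_number_general p q D F a N hmono hhomog
end

section
/- For a nonsingular n×n real matrix A and indices k, ℓ ∈ [n], the componentwise condition number of the (k,ℓ) entry of the matrix inverse satisfies c†_{kℓ}(A) ≤ c_det(A) + c_det(A_{(ℓk)}), where c†_{kℓ}(A) = lim_{δ→0} sup_{A'∈B(A,δ)} |γ'_{kℓ} − γ_{kℓ}|/(δ|γ_{kℓ}|) when γ_{kℓ} ≠ 0. -/
open Matrix Filter Set
open scoped ENNReal Topology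

/-- The componentwise condition number of the `(k,ℓ)` entry of matrix inversion at `A`:
`lim_{δ→0⁺} sup_{A' ∈ B(A,δ)} |γ'_{kℓ} − γ_{kℓ}| / (δ |γ_{kℓ}|)`. -/
noncomputable def cinv {m : ℕ} (A : Matrix (Fin m) (Fin m) ℝ) (k l : Fin m) : ℝ≥0∞ :=
  limsup
    (fun δ : ℝ => ⨆ A' ∈ cball A δ,
      ENNReal.ofReal |A'⁻¹ k l - A⁻¹ k l| / ENNReal.ofReal (δ * |A⁻¹ k l|))
    (𝓝[>] (0 : ℝ))

/-- `cinv` and `cdet` are, definitionally, limsups of suprema of `relErr` over `cball`. -/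
noncomputable def relErr (x' x δ : ℝ) : ℝ≥0∞ :=
  ENNReal.ofReal |x' - x| / ENNReal.ofReal (δ * |x|)

theorem relErr_self (x δ : ℝ) : relErr x x δ = 0 := by
  simp [relErr]

theorem relErr_zero_right {x' : ℝ} (hx' : x' ≠ 0) (δ : ℝ) : relErr x' 0 δ = ⊤ := by
  simp [relErr, ENNReal.div_zero, hx']

theorem relErr_eq_ofReal {x' x δ : ℝ} (hx : x ≠ 0) (hδ : 0 < δ) :
    relErr x' x δ = ENNReal.ofReal (|x' - x| / (δ * |x|)) :=
  (ENNReal.ofReal_div_of_pos (by positivity)).symm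

theorem relErr_mul_left {s : ℝ} (hs : s ≠ 0) (x' x δ : ℝ) :
    relErr (s * x') (s * x) δ = relErr x' x δ := by
  have hs' : ENNReal.ofReal |s| ≠ 0 := by simpa using hs
  rw [relErr, ← mul_sub, abs_mul, abs_mul, mul_left_comm, ENNReal.ofReal_mul (abs_nonneg _),
    ENNReal.ofReal_mul (abs_nonneg _), ENNReal.mul_div_mul_left _ _ hs' ENNReal.ofReal_ne_top,
    relErr]

theorem ne_zero_of_abs_le_mul_abs {d d' c : ℝ} (hd : d ≠ 0) (hdc : |d| ≤ c * |d'|) : d' ≠ 0 := by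
  rintro rfl
  exact hd (abs_nonpos_iff.1 (by simpa using hdc))

theorem abs_div_sub_div_div_le {d d' m m' c : ℝ} (hd : d ≠ 0) (hm : m ≠ 0)
    (hdc : |d| ≤ c * |d'|) :
    |m' / d' - m / d| / |m / d| ≤ c * (|d' - d| / |d| + |m' - m| / |m|) := by
  have hd' := ne_zero_of_abs_le_mul_abs hd hdc
  have hD' : 0 < |d'| := abs_pos.2 hd'
  have hsplit : m' / d' - m / d = d / d' * ((m' - m) / m - (d' - d) / d) * (m / d) := by
    field_simp; ring
  rw [hsplit, abs_mul, abs_mul, mul_div_cancel_right₀ _ (abs_ne_zero.2 (div_ne_zero hm hd)),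
    ← abs_div, ← abs_div]
  have hdd' : |d / d'| ≤ c := by rw [abs_div]; exact (div_le_iff₀ hD').2 hdc
  exact mul_le_mul hdd' ((abs_sub _ _).trans_eq (add_comm _ _)) (abs_nonneg _)
    ((abs_nonneg _).trans hdd')

theorem relErr_div_le {d d' m m' c δ : ℝ} (hd : d ≠ 0) (hdc : |d| ≤ c * |d'|) (hδ : 0 < δ) :
    relErr (m' / d') (m / d) δ ≤ ENNReal.ofReal c * (relErr d' d δ + relErr m' m δ) := by
  have hc : 0 < c := pos_of_mul_pos_left ((abs_pos.2 hd).trans_le hdc) (abs_nonneg _)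
  -- For `m = 0` both sides are `⊤`, unless `m' = 0` too and the left side is `0 / 0 = 0`.
  rcases eq_or_ne m 0 with rfl | hm
  · rcases eq_or_ne m' 0 with rfl | hm'
    · simp [relErr_self]
    · simp [relErr_zero_right hm', hc]
  rw [relErr_eq_ofReal (div_ne_zero hm hd) hδ, relErr_eq_ofReal hd hδ, relErr_eq_ofReal hm hδ,
    ← ENNReal.ofReal_add (by positivity) (by positivity), ← ENNReal.ofReal_mul hc.le]
  refine ENNReal.ofReal_le_ofReal ?_
  have key := abs_div_sub_div_div_le (m' := m') hd hm hdc
  calc |m' / d' - m / d| / (δ * |m / d|) = (|m' / d' - m / d| / |m / d|) / δ := by ring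
    _ ≤ c * (|d' - d| / |d| + |m' - m| / |m|) / δ := by gcongr
    _ = c * (|d' - d| / (δ * |d|) + |m' - m| / (δ * |m|)) := by ring

theorem Matrix.inv_apply_eq_det_submatrix_div_det {K : Type*} [Field K] {n : ℕ}
    (A : Matrix (Fin (n + 1)) (Fin (n + 1)) K) (k l : Fin (n + 1)) :
    A⁻¹ k l = (-1) ^ (l + k : ℕ) * (A.submatrix l.succAbove k.succAbove).det / A.det := by
  rw [Matrix.inv_def, Matrix.smul_apply, Matrix.adjugate_fin_succ_eq_det_submatrix,
    Ring.inverse_eq_inv, smul_eq_mul, div_eq_inv_mul]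

theorem eventually_cball_subset {m : ℕ} {A : Matrix (Fin m) (Fin m) ℝ}
    {U : Set (Matrix (Fin m) (Fin m) ℝ)} (hU : U ∈ 𝓝 A) : ∀ᶠ δ in 𝓝 (0 : ℝ), cball A δ ⊆ U := by
  -- `Matrix` carries the product topology; work in the sup metric of `Fin m → Fin m → ℝ`.
  change U ∈ @nhds (Fin m → Fin m → ℝ) _ A at hU
  obtain ⟨ε, hε, hball⟩ := Metric.mem_nhds_iff.1 hU
  have hsmall : ∀ᶠ δ in 𝓝 (0 : ℝ), ∀ i j, δ * |A i j| < ε := by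
    simp only [eventually_all]
    intro i j
    exact (continuous_id.mul continuous_const).tendsto' 0 0 (zero_mul _) |>.eventually
      (gt_mem_nhds hε)
  filter_upwards [hsmall] with δ hδ A' hA'
  refine hball ((dist_pi_lt_iff hε).2 fun i => (dist_pi_lt_iff hε).2 fun j => ?_)
  exact (hA' i j).trans_lt (hδ i j)

theorem submatrix_mem_cball {m p : ℕ} {A A' : Matrix (Fin m) (Fin m) ℝ} {δ : ℝ}
    (h : A' ∈ cball A δ) (f g : Fin p → Fin m) :
    A'.submatrix f g ∈ cball (A.submatrix f g) δ :=
  fun i j => h (f i) (g j)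

theorem ContinuousAt.eventually_abs_le_mul_abs {X : Type*} [TopologicalSpace X] {f : X → ℝ}
    {a : X} (hf : ContinuousAt f a) {c : ℝ} (hc : 1 < c) : ∀ᶠ x in 𝓝 a, |f a| ≤ c * |f x| := by
  rcases eq_or_ne (f a) 0 with ha | ha
  · exact Eventually.of_forall fun x => by rw [ha, abs_zero]; positivity
  have hc0 : 0 < c := one_pos.trans hc
  have hlt : |f a| / c < |f a| := div_lt_self (abs_pos.2 ha) hc
  filter_upwards [hf.abs.eventually (lt_mem_nhds hlt)] with x hx
  exact (div_le_iff₀' hc0).1 hx.le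

/-- Unlike `ENNReal.limsup_add_le`, no `CountableInterFilter` assumption (`𝓝[>] 0` is not one). -/
theorem ENNReal.limsup_add_le_add_limsup {α : Type*} {l : Filter α} (u v : α → ℝ≥0∞) :
    limsup (u + v) l ≤ limsup u l + limsup v l := by
  refine ENNReal.le_of_forall_pos_le_add fun ε hε hfin => ?_
  obtain ⟨hu, hv⟩ := ENNReal.add_lt_top.1 hfin
  have hε2 : (ε / 2 : ℝ≥0∞) ≠ 0 := by simpa using hε.ne'
  have hu' := ENNReal.lt_add_right hu.ne hε2
  have hv' := ENNReal.lt_add_right hv.ne hε2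
  calc limsup (u + v) l ≤ (limsup u l + ε / 2) + (limsup v l + ε / 2) :=
        limsup_le_of_le (h := ((eventually_lt_of_limsup_lt hu').and
          (eventually_lt_of_limsup_lt hv')).mono fun x hx => add_le_add hx.1.le hx.2.le)
    _ = limsup u l + limsup v l + ε := by
        rw [add_add_add_comm, ENNReal.add_halves]

theorem ENNReal.limsup_le_limsup_of_forall_one_lt {α : Type*} {l : Filter α} {u v : α → ℝ≥0∞}
    (h : ∀ c : ℝ, 1 < c → ∀ᶠ x in l, u x ≤ ENNReal.ofReal c * v x) :
    limsup u l ≤ limsup v l := by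
  have hc : ∀ c : ℝ, 1 < c → limsup u l ≤ ENNReal.ofReal c * limsup v l := fun c hc =>
    (limsup_le_limsup (h c hc)).trans_eq
      (ENNReal.limsup_const_mul_of_ne_top ENNReal.ofReal_ne_top)
  have hlim :
      Tendsto (fun c : ℝ => ENNReal.ofReal c * limsup v l) (𝓝[>] 1) (𝓝 (limsup v l)) := by
    have h1 : Tendsto ENNReal.ofReal (𝓝[>] (1 : ℝ)) (𝓝 1) := by
      simpa using (ENNReal.continuous_ofReal.tendsto 1).mono_left nhdsWithin_le_nhds
    simpa using ENNReal.Tendsto.mul_const h1 (Or.inl one_ne_zero)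
  exact ge_of_tendsto hlim (eventually_nhdsWithin_of_forall hc)

/-- For a nonsingular matrix `A` and indices `k, ℓ`,
`c†_{kℓ}(A) ≤ c_det(A) + c_det(A_{(ℓk)})`. -/
theorem cinv_le_cdet_add_cdet_minor
    (n : ℕ) (A : Matrix (Fin (n + 1)) (Fin (n + 1)) ℝ) (hA : IsUnit A.det)
    (k l : Fin (n + 1)) :
    cinv A k l ≤ cdet A + cdet (A.submatrix l.succAbove k.succAbove) := by
  set B := A.submatrix l.succAbove k.succAbove
  have hsign : (-1 : ℝ) ^ (l + k : ℕ) ≠ 0 := pow_ne_zero _ (by norm_num)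
  refine (ENNReal.limsup_le_limsup_of_forall_one_lt fun c hc => ?_).trans
    (ENNReal.limsup_add_le_add_limsup _ _)
  have hdet := continuous_id.matrix_det.continuousAt.eventually_abs_le_mul_abs (a := A) hc
  filter_upwards [self_mem_nhdsWithin, nhdsWithin_le_nhds (eventually_cball_subset hdet)]
    with δ hδ hball
  refine iSup₂_le fun A' hA' => ?_
  set B' := A'.submatrix l.succAbove k.succAbove
  calc relErr (A'⁻¹ k l) (A⁻¹ k l) δ = relErr (B'.det / A'.det) (B.det / A.det) δ := by
        rw [Matrix.inv_apply_eq_det_submatrix_div_det, Matrix.inv_apply_eq_det_submatrix_div_det,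
          mul_div_assoc, mul_div_assoc, relErr_mul_left hsign]
    _ ≤ ENNReal.ofReal c * (relErr A'.det A.det δ + relErr B'.det B.det δ) :=
        relErr_div_le hA.ne_zero (hball hA') hδ
    _ ≤ _ := mul_le_mul_right (add_le_add
        (le_iSup₂ (f := fun A' (_ : A' ∈ cball A δ) => relErr A'.det A.det δ) A' hA')
        (le_iSup₂ (f := fun B' (_ : B' ∈ cball B δ) => relErr B'.det B.det δ) B'
          (submatrix_mem_cball hA' _ _))) _
end

section
/- For a nonsingular n×n real matrix A, b ∈ ℝⁿ, x = A^{-1}b, and index k ∈ [n], the componentwise condition number of the k-th solution coordinate satisfies c_k(A,b) ≤ c_det(A) + c_det(R_k), where R_k is the matrix obtained by replacing the k-th column of A by b, and perturbations of (A,b) are componentwise relative. -/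
open Matrix Filter Set
open scoped ENNReal Topology

/-- The componentwise condition number of the `k`-th coordinate of the solution of `Ax = b`,
under componentwise relative perturbations of the pair `(A, b)`. -/
noncomputable def csol {m : ℕ} (A : Matrix (Fin m) (Fin m) ℝ) (b : Fin m → ℝ) (k : Fin m) :
    ℝ≥0∞ :=
  limsup
    (fun δ : ℝ => ⨆ A' ∈ cball A δ, ⨆ b' ∈ {b' : Fin m → ℝ | ∀ i, |b' i - b i| ≤ δ * |b i|},
      ENNReal.ofReal |A'⁻¹.mulVec b' k - A⁻¹.mulVec b k| /
        ENNReal.ofReal (δ * |A⁻¹.mulVec b k|))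
    (𝓝[>] (0 : ℝ))

open scoped NNReal

/-! A perturbation of size `δ` moves `det A` by at most about `c_det(A) δ |det A|` and `det R_k`
by at most about `c_det(R_k) δ |det R_k|`, because perturbing `(A, b)` perturbs `R_k` within the
same componentwise ball. By Cramer's rule `x_k = det R_k / det A`, and the relative error of a
quotient is at most the sum of the relative errors of its terms, up to a factor `1 / (1 - s)`
(`s` the relative error of the denominator) that tends to `1` as `δ → 0`. -/

/-- Cramer's rule; it also holds for singular `A`, where both sides are `0`. -/
theorem Matrix.inv_mulVec_apply_eq_det_updateCol_div_det {n K : Type*} [Fintype n]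
    [DecidableEq n] [Field K] (A : Matrix n n K) (b : n → K) (k : n) :
    (A⁻¹ *ᵥ b) k = (A.updateCol k b).det / A.det := by
  rw [inv_def, smul_mulVec, ← cramer_eq_adjugate_mulVec, Pi.smul_apply, cramer_apply,
    Ring.inverse_eq_inv', smul_eq_mul, div_eq_inv_mul]

theorem abs_div_sub_div_le {D D' R R' s t : ℝ} (hD : D ≠ 0) (hs : s < 1)
    (hD' : |D' - D| ≤ s * |D|) (hR' : |R' - R| ≤ t * |R|) :
    |R' / D' - R / D| ≤ (s + t) / (1 - s) * |R / D| := by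
  have hDpos : 0 < |D| := abs_pos.mpr hD
  have hD'lower : (1 - s) * |D| ≤ |D'| := by
    have := abs_sub_abs_le_abs_sub D D'
    rw [abs_sub_comm] at this
    linarith
  have hD'pos : 0 < |D'| := (mul_pos (by linarith) hDpos).trans_le hD'lower
  have hnum : |R' * D - D' * R| ≤ (s + t) * |R| * |D| :=
    calc |R' * D - D' * R| = |(R' - R) * D - R * (D' - D)| := by ring_nf
      _ ≤ |R' - R| * |D| + |R| * |D' - D| := by
        rw [← abs_mul, ← abs_mul]; exact abs_sub _ _
      _ ≤ t * |R| * |D| + |R| * (s * |D|) := by gcongr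
      _ = (s + t) * |R| * |D| := by ring
  calc |R' / D' - R / D| = |R' * D - D' * R| / (|D'| * |D|) := by
        rw [div_sub_div _ _ (abs_pos.mp hD'pos) hD, abs_div, abs_mul]
    _ ≤ (s + t) * |R| * |D| / ((1 - s) * |D| * |D|) := by
        gcongr
        exact (abs_nonneg _).trans hnum
    _ = (s + t) / (1 - s) * |R / D| := by
        rw [abs_div]; field_simp

theorem ENNReal.le_mul_of_ofReal_div_le {a b : ℝ} {c : ℝ≥0} (hb : 0 ≤ b)
    (h : ENNReal.ofReal a / ENNReal.ofReal b ≤ c) : a ≤ c * b := by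
  rcases hb.eq_or_lt with rfl | hb
  · rw [mul_zero]
    by_contra! ha
    rw [ENNReal.ofReal_zero, ENNReal.div_zero (ENNReal.ofReal_pos.mpr ha).ne'] at h
    exact ENNReal.coe_ne_top (top_le_iff.mp h)
  · rw [ENNReal.div_le_iff (ENNReal.ofReal_pos.mpr hb).ne' ENNReal.ofReal_ne_top,
      ← ENNReal.ofReal_coe_nnreal, ← ENNReal.ofReal_mul (by positivity)] at h
    exact (ENNReal.ofReal_le_ofReal_iff (by positivity)).mp h

theorem ENNReal.le_add_of_forall_lt_coe {a b c : ℝ≥0∞}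
    (h : ∀ f g : ℝ≥0, b < f → c < g → a ≤ f + g) : a ≤ b + c := by
  refine ENNReal.le_of_forall_pos_le_add fun ε hε hbc => ?_
  lift b to ℝ≥0 using (ENNReal.add_lt_top.mp hbc).1.ne
  lift c to ℝ≥0 using (ENNReal.add_lt_top.mp hbc).2.ne
  have := h (b + ε / 2) (c + ε / 2) (by exact_mod_cast lt_add_of_pos_right _ (half_pos hε))
    (by exact_mod_cast lt_add_of_pos_right _ (half_pos hε))
  convert this using 1
  push_cast
  rw [add_add_add_comm, ENNReal.add_halves]

theorem updateCol_mem_cball {m : ℕ} {A A' : Matrix (Fin m) (Fin m) ℝ} {b b' : Fin m → ℝ}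
    {δ : ℝ} (hA' : A' ∈ cball A δ) (hb' : ∀ i, |b' i - b i| ≤ δ * |b i|) (k : Fin m) :
    A'.updateCol k b' ∈ cball (A.updateCol k b) δ := by
  intro i j
  rcases eq_or_ne j k with rfl | hj
  · simp [hb' i]
  · simpa [updateCol_ne hj] using hA' i j

theorem eventually_abs_det_sub_le_of_cdet_lt {m : ℕ} {A : Matrix (Fin m) (Fin m) ℝ}
    {f : ℝ≥0} (h : cdet A < f) :
    ∀ᶠ δ in 𝓝[>] (0 : ℝ), ∀ A' ∈ cball A δ, |A'.det - A.det| ≤ f * δ * |A.det| := by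
  filter_upwards [eventually_lt_of_limsup_lt h, self_mem_nhdsWithin]
    with δ hδ (hδpos : 0 < δ) A' hA'
  rw [mul_assoc]
  exact ENNReal.le_mul_of_ofReal_div_le (by positivity) ((le_iSup₂ A' hA').trans hδ.le)

theorem csol_le_of_cdet_lt {m : ℕ} {A : Matrix (Fin m) (Fin m) ℝ} (hA : A.det ≠ 0)
    {b : Fin m → ℝ} {k : Fin m} {f g : ℝ≥0} (hf : cdet A < f)
    (hg : cdet (A.updateCol k b) < g) : csol A b k ≤ f + g := by
  set K : ℝ → ℝ := fun δ => (f + g) / (1 - f * δ)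
  have hlim : Tendsto (fun δ => ENNReal.ofReal (K δ)) (𝓝[>] 0) (𝓝 (f + g)) := by
    have hK0 : ENNReal.ofReal (K 0) = f + g := by simp [K, ENNReal.ofReal_add]
    have : ContinuousAt K 0 := by fun_prop (disch := simp)
    rw [← hK0]
    exact ((ENNReal.continuous_ofReal.tendsto _).comp this.tendsto).mono_left nhdsWithin_le_nhds
  have hsmall : ∀ᶠ δ in 𝓝[>] (0 : ℝ), (f : ℝ) * δ < 1 :=
    (((continuous_const_mul (f : ℝ)).tendsto' 0 0 (mul_zero _)).eventually_lt_const
      one_pos).filter_mono nhdsWithin_le_nhds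
  refine (limsup_le_limsup ?_).trans_eq hlim.limsup_eq
  filter_upwards [eventually_abs_det_sub_le_of_cdet_lt hf,
    eventually_abs_det_sub_le_of_cdet_lt hg, hsmall] with δ hdetA hdetR hδ
  refine iSup₂_le fun A' hA' => iSup₂_le fun b' hb' => ENNReal.div_le_of_le_mul ?_
  rw [← ENNReal.ofReal_mul (div_nonneg (by positivity) (by linarith)),
    inv_mulVec_apply_eq_det_updateCol_div_det, inv_mulVec_apply_eq_det_updateCol_div_det]
  refine ENNReal.ofReal_le_ofReal ((abs_div_sub_div_le hA hδ (hdetA A' hA')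
    (hdetR _ (updateCol_mem_cball hA' hb' k))).trans_eq ?_)
  ring

/-- For a nonsingular matrix `A`, `b ∈ ℝⁿ` and an index `k`,
`c_k(A,b) ≤ c_det(A) + c_det(R_k)` where `R_k` is `A` with its `k`-th column replaced
by `b`. -/
theorem csol_le_cdet_add_cdet_cramer
    (m : ℕ) (A : Matrix (Fin m) (Fin m) ℝ) (hA : IsUnit A.det)
    (b : Fin m → ℝ) (k : Fin m) :
    csol A b k ≤ cdet A + cdet (A.updateCol k b) :=
  ENNReal.le_add_of_forall_lt_coe fun _ _ hf hg => csol_le_of_cdet_lt hA.ne_zero hf hg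
end
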